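/- Let J satisfy (J), let a : ℝ → ℝ be bounded and continuous with a_− := inf a, a_+ := sup a, let λ > a_+, and let φ > 0 be continuous on ℝ and satisfy (J*φ)(x) = (1 + λ − a(x))φ(x) for all x ≥ b. Then with C := C_J(1+λ−a_−), where C_J := ‖J′‖_∞ / inf_{x∈[−δ,δ]}(J*J)(x), the Harnack-type inequality φ(y) ≤ (1 + λ − a_−) e^{C|x−y|} φ(x) holds for all x, y ∈ [b+δ, ∞). -/

import Mathlib

/-
Set `u = J * φ`, so `u' = J' * φ` and `|u'(t)| ≤ ‖J'‖_∞ ∫_{-δ}^{δ} φ(t - y) dy`. On the other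
hand `(J * J) * φ = J * u`, and for `t ≥ b + δ` the equation gives `u ≤ (1 + λ - a_-) φ` on
`[t - δ, t + δ]`; since `J * J ≥ inf_{[-δ,δ]} (J * J) > 0` there, the same integral is at most
`(1 + λ - a_-) u(t) / inf (J * J)`. Hence `|u'| ≤ C u` on `[b + δ, ∞)`, so `log u` is
`C`-Lipschitz there, and the equation also gives `φ ≤ u ≤ (1 + λ - a_-) φ` on `[b, ∞)`.
-/

open MeasureTheory Filter Real Set

/-- Convolution `(J*φ)(x) = ∫ J(y) φ(x−y) dy`. -/
noncomputable def convol (J φ : ℝ → ℝ) : ℝ → ℝ := fun x => ∫ y, J y * φ (x - y)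

/-- `C_J = ‖J′‖_∞ / inf_{x∈[−δ,δ]} (J*J)(x)`. -/
noncomputable def CJconst (J : ℝ → ℝ) (δ : ℝ) : ℝ :=
  (⨆ y : ℝ, |deriv J y|) / sInf (convol J J '' Set.Icc (-δ) δ)

open Function
open scoped Convolution

lemma hasCompactSupport_of_tsupport_subset_Icc {f : ℝ → ℝ} {δ : ℝ}
    (hf : tsupport f ⊆ Icc (-δ) δ) :
    HasCompactSupport f :=
  isCompact_Icc.of_isClosed_subset (isClosed_tsupport f) hf

section Convolution

variable {f g φ : ℝ → ℝ} {δ : ℝ}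

lemma convol_eq_convolution (f g : ℝ → ℝ) :
    convol f g = f ⋆[ContinuousLinearMap.mul ℝ ℝ] g := rfl

lemma integrable_mul_comp_sub (hf : Continuous f) (hfcs : HasCompactSupport f) (hg : Continuous g)
    (t : ℝ) : Integrable (fun y => f y * g (t - y)) :=
  hfcs.convolutionExists_left (ContinuousLinearMap.mul ℝ ℝ) hf hg.locallyIntegrable t

lemma continuous_convol (hf : Continuous f) (hfcs : HasCompactSupport f) (hg : Continuous g) :
    Continuous (convol f g) :=
  hfcs.continuous_convolution_left (ContinuousLinearMap.mul ℝ ℝ) hf hg.locallyIntegrable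

lemma hasDerivAt_convol (hf : ContDiff ℝ 1 f) (hfcs : HasCompactSupport f) (hg : Continuous g)
    (t : ℝ) : HasDerivAt (convol f g) (convol (deriv f) g t) t :=
  hfcs.hasDerivAt_convolution_left (ContinuousLinearMap.mul ℝ ℝ) hf hg.locallyIntegrable t

lemma convol_assoc (hf : Continuous f) (hfcs : HasCompactSupport f) (hg : Continuous g)
    (hgcs : HasCompactSupport g) (hφ : Continuous φ) (t : ℝ) :
    convol (convol f g) φ t = convol f (convol g φ) t := by
  simp only [convol_eq_convolution]
  have hgφ := hgcs.norm.continuous_convolution_left (ContinuousLinearMap.mul ℝ ℝ) hg.norm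
    (hφ.norm.locallyIntegrable (μ := volume))
  exact convolution_assoc _ _ _ _ (fun x y z => mul_assoc x y z) hf.aestronglyMeasurable
    hg.aestronglyMeasurable hφ.aestronglyMeasurable
    (ae_of_all _ (hfcs.convolutionExists_left _ hf hg.locallyIntegrable))
    (ae_of_all _ (hgcs.norm.convolutionExists_left _ hg.norm hφ.norm.locallyIntegrable))
    (hfcs.norm.convolutionExists_left _ hf.norm hgφ.locallyIntegrable t)

lemma convol_nonneg (hf : ∀ x, 0 ≤ f x) (hg : ∀ x, 0 ≤ g x) (t : ℝ) : 0 ≤ convol f g t :=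
  integral_nonneg fun y => mul_nonneg (hf y) (hg _)

lemma convol_self_pos (hδ : 0 < δ) (hf : Continuous f) (hfcs : HasCompactSupport f)
    (hfnonneg : ∀ x, 0 ≤ f x) (hfpos : ∀ t, |t| < δ → 0 < f t) {w : ℝ} (hw : w ∈ Icc (-δ) δ) :
    0 < convol f f w := by
  have hhalf : |w / 2| < δ := by
    rw [abs_div, abs_two]
    linarith [abs_le.mpr hw]
  have hcont : Continuous fun y => f y * f (w - y) := by fun_prop
  refine hcont.integral_pos_of_hasCompactSupport_nonneg_nonzero hfcs.mul_right
    (fun z => mul_nonneg (hfnonneg z) (hfnonneg _)) (x := w / 2) ?_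
  rw [show w - w / 2 = w / 2 by ring]
  exact (mul_pos (hfpos _ hhalf) (hfpos _ hhalf)).ne'

lemma abs_convol_le (hfsupp : support f ⊆ Icc (-δ) δ) {M : ℝ} (hM : ∀ y, |f y| ≤ M)
    (hφ : Continuous φ) (hφnonneg : ∀ x, 0 ≤ φ x) (t : ℝ) :
    |convol f φ t| ≤ M * ∫ y in Icc (-δ) δ, φ (t - y) := by
  have hrestrict : convol f φ t = ∫ y in Icc (-δ) δ, f y * φ (t - y) :=
    (setIntegral_eq_integral_of_forall_compl_eq_zero fun y hy => by
      rw [notMem_support.mp (fun h => hy (hfsupp h)), zero_mul]).symm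
  have hint : IntegrableOn (fun y => M * φ (t - y)) (Icc (-δ) δ) :=
    Continuous.integrableOn_Icc (by fun_prop)
  rw [hrestrict, ← integral_const_mul, ← Real.norm_eq_abs]
  refine norm_integral_le_of_norm_le hint (ae_of_all _ fun y => ?_)
  rw [Real.norm_eq_abs, abs_mul, abs_of_nonneg (hφnonneg _)]
  exact mul_le_mul_of_nonneg_right (hM y) (hφnonneg _)

lemma mul_setIntegral_le_convol (hg : Continuous g) (hgcs : HasCompactSupport g)
    (hgnonneg : ∀ x, 0 ≤ g x) {m : ℝ} (hm : ∀ y ∈ Icc (-δ) δ, m ≤ g y) (hφ : Continuous φ)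
    (hφnonneg : ∀ x, 0 ≤ φ x) (t : ℝ) :
    m * ∫ y in Icc (-δ) δ, φ (t - y) ≤ convol g φ t := by
  have hφt : Continuous fun y => φ (t - y) := hφ.comp (continuous_const.sub continuous_id)
  rw [← integral_const_mul]
  calc ∫ y in Icc (-δ) δ, m * φ (t - y)
      ≤ ∫ y in Icc (-δ) δ, g y * φ (t - y) :=
        setIntegral_mono_on (continuous_const.mul hφt).integrableOn_Icc
          (hg.mul hφt).integrableOn_Icc measurableSet_Icc
          fun y hy => mul_le_mul_of_nonneg_right (hm y hy) (hφnonneg _)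
    _ ≤ convol g φ t :=
        setIntegral_le_integral (integrable_mul_comp_sub hg hgcs hφ t)
          (ae_of_all _ fun y => mul_nonneg (hgnonneg y) (hφnonneg _))

lemma convol_le_mul_convol (hf : Continuous f) (hfnonneg : ∀ x, 0 ≤ f x)
    (hfsupp : tsupport f ⊆ Icc (-δ) δ) (hg : Continuous g) (hφ : Continuous φ) {K t : ℝ}
    (hle : ∀ z ∈ Icc (-δ) δ, g (t - z) ≤ K * φ (t - z)) :
    convol f g t ≤ K * convol f φ t := by
  have hfcs := hasCompactSupport_of_tsupport_subset_Icc hfsupp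
  rw [convol, convol, ← integral_const_mul]
  refine integral_mono (integrable_mul_comp_sub hf hfcs hg t)
    ((integrable_mul_comp_sub hf hfcs hφ t).const_mul K) fun z => ?_
  by_cases hz : z ∈ Icc (-δ) δ
  · calc f z * g (t - z) ≤ f z * (K * φ (t - z)) :=
          mul_le_mul_of_nonneg_left (hle z hz) (hfnonneg z)
      _ = K * (f z * φ (t - z)) := by ring
  · simp [image_eq_zero_of_notMem_tsupport (fun h => hz (hfsupp h))]

end Convolution

section Kernel

variable {J : ℝ → ℝ} {δ : ℝ}

lemma pos_of_abs_lt_of_tsupport_eq_Icc (hJnonneg : ∀ x, 0 ≤ J x) (hJeven : ∀ x, J (-x) = J x)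
    (hJanti : AntitoneOn J (Ici 0)) (hJsupp : tsupport J = Icc (-δ) δ) {t : ℝ} (ht : |t| < δ) :
    0 < J t := by
  have hJabs : ∀ w, J |w| = J w := fun w => by
    rcases abs_choice w with h | h <;> simp only [h, hJeven]
  refine (hJnonneg t).lt_of_ne fun hzero => ?_
  -- `J` would vanish outside `[-|t|, |t|]`, so its support could not reach `δ`.
  have hsupp : support J ⊆ Icc (-|t|) |t| := fun w hw => by
    by_contra hout
    have htw : |t| ≤ |w| := le_of_lt (not_le.mp fun h => hout (abs_le.mp h))
    refine hw (le_antisymm ?_ (hJnonneg w))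
    rw [← hJabs w, hzero, ← hJabs t]
    exact hJanti (abs_nonneg t) (abs_nonneg w) htw
  have hδ : δ ∈ tsupport J := hJsupp ▸ right_mem_Icc.mpr (by linarith [abs_nonneg t])
  linarith [(closure_minimal hsupp isClosed_Icc hδ).2]

lemma abs_deriv_le_iSup (hJ : ContDiff ℝ 1 J) (hJcs : HasCompactSupport J) (y : ℝ) :
    |deriv J y| ≤ ⨆ z, |deriv J z| :=
  le_ciSup ((hJ.continuous_deriv le_rfl).norm.bddAbove_range_of_hasCompactSupport
    hJcs.deriv.norm) y

lemma sInf_convol_self_pos (hδ : 0 < δ) (hJ : Continuous J) (hJcs : HasCompactSupport J)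
    (hJnonneg : ∀ x, 0 ≤ J x) (hJpos : ∀ t, |t| < δ → 0 < J t) :
    0 < sInf (convol J J '' Icc (-δ) δ) := by
  have hcompact := (isCompact_Icc (a := -δ) (b := δ)).image (continuous_convol hJ hJcs hJ)
  obtain ⟨w, hw, hwmin⟩ := hcompact.sInf_mem ((nonempty_Icc.mpr (by linarith)).image _)
  exact hwmin ▸ convol_self_pos hδ hJ hJcs hJnonneg hJpos hw

lemma sInf_le_convol_self (hJ : Continuous J) (hJcs : HasCompactSupport J) {y : ℝ}
    (hy : y ∈ Icc (-δ) δ) : sInf (convol J J '' Icc (-δ) δ) ≤ convol J J y :=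
  csInf_le (isCompact_Icc.image (continuous_convol hJ hJcs hJ)).bddBelow (mem_image_of_mem _ hy)

end Kernel

lemma le_exp_mul_of_abs_deriv_le {u u' : ℝ → ℝ} {s : Set ℝ} {C : ℝ} (hs : Convex ℝ s)
    (hu : ∀ x ∈ s, HasDerivAt u (u' x) x) (hpos : ∀ x ∈ s, 0 < u x)
    (hbound : ∀ x ∈ s, |u' x| ≤ C * u x) {x y : ℝ} (hx : x ∈ s) (hy : y ∈ s) :
    u y ≤ exp (C * |x - y|) * u x := by
  have hlog : ‖log (u y) - log (u x)‖ ≤ C * ‖y - x‖ :=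
    hs.norm_image_sub_le_of_norm_hasDerivWithin_le
      (fun w hw => ((hu w hw).log (hpos w hw).ne').hasDerivWithinAt)
      (fun w hw => by
        rw [Real.norm_eq_abs, abs_div, abs_of_pos (hpos w hw), div_le_iff₀ (hpos w hw)]
        exact hbound w hw) hx hy
  rw [Real.norm_eq_abs, Real.norm_eq_abs, abs_sub_comm y x] at hlog
  calc u y = exp (log (u y)) := (exp_log (hpos y hy)).symm
    _ ≤ exp (log (u x) + C * |x - y|) := exp_le_exp.mpr (by linarith [(abs_le.mp hlog).2])
    _ = exp (C * |x - y|) * u x := by rw [exp_add, exp_log (hpos x hx), mul_comm]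

lemma abs_convol_deriv_le_of_convol_le {J φ : ℝ → ℝ} {δ b M m K t : ℝ} (hJ : ContDiff ℝ 1 J)
    (hJnonneg : ∀ x, 0 ≤ J x) (hJsupp : tsupport J ⊆ Icc (-δ) δ) (hM : ∀ y, |deriv J y| ≤ M)
    (hm : 0 < m) (hmJJ : ∀ y ∈ Icc (-δ) δ, m ≤ convol J J y) (hφ : Continuous φ)
    (hφnonneg : ∀ x, 0 ≤ φ x) (hK : ∀ x, b ≤ x → convol J φ x ≤ K * φ x) (ht : b + δ ≤ t) :
    |convol (deriv J) φ t| ≤ M / m * K * convol J φ t := by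
  have hJc := hJ.continuous
  have hJcs := hasCompactSupport_of_tsupport_subset_Icc hJsupp
  set I := ∫ y in Icc (-δ) δ, φ (t - y)
  have hupper : |convol (deriv J) φ t| ≤ M * I :=
    abs_convol_le (support_deriv_subset.trans hJsupp) hM hφ hφnonneg t
  have hJJcs : HasCompactSupport (convol J J) :=
    HasCompactSupport.convolution (ContinuousLinearMap.mul ℝ ℝ) hJcs hJcs
  have hlower : m * I ≤ K * convol J φ t := calc
    m * I ≤ convol (convol J J) φ t :=
      mul_setIntegral_le_convol (continuous_convol hJc hJcs hJc) hJJcs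
        (convol_nonneg hJnonneg hJnonneg) hmJJ hφ hφnonneg t
    _ = convol J (convol J φ) t := convol_assoc hJc hJcs hJc hJcs hφ t
    _ ≤ K * convol J φ t :=
      convol_le_mul_convol hJc hJnonneg hJsupp (continuous_convol hJc hJcs hφ) hφ
        fun z hz => hK _ (by linarith [hz.2])
  have hM0 : 0 ≤ M := (abs_nonneg _).trans (hM 0)
  calc |convol (deriv J) φ t| ≤ M * I := hupper
    _ = M / m * (m * I) := by field_simp
    _ ≤ M / m * (K * convol J φ t) := by gcongr
    _ = M / m * K * convol J φ t := by ring

theorem stmt6_general (J a φ : ℝ → ℝ) (δ am ap lam b : ℝ) (hδ : 0 < δ)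
    (hJC1 : ContDiff ℝ 1 J) (hJnonneg : ∀ x, 0 ≤ J x)
    (hJeven : ∀ x, J (-x) = J x) (hJanti : AntitoneOn J (Set.Ici 0))
    (hJsupp : tsupport J = Set.Icc (-δ) δ)
    (ham : IsGLB (Set.range a) am) (hap : IsLUB (Set.range a) ap)
    (hlam : ap < lam)
    (hφC : Continuous φ) (hφpos : ∀ x, 0 < φ x)
    (heq : ∀ x, b ≤ x → convol J φ x = (1 + lam - a x) * φ x) :
    ∀ x y, b + δ ≤ x → b + δ ≤ y →
      φ y ≤ (1 + lam - am) *
        Real.exp (CJconst J δ * (1 + lam - am) * |x - y|) * φ x := by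
  intro x y hx hy
  have hJc := hJC1.continuous
  have hJcs := hasCompactSupport_of_tsupport_subset_Icc hJsupp.le
  have hJpos : ∀ t, |t| < δ → 0 < J t :=
    fun _ => pos_of_abs_lt_of_tsupport_eq_Icc hJnonneg hJeven hJanti hJsupp
  have hupper : ∀ t, b ≤ t → convol J φ t ≤ (1 + lam - am) * φ t := fun t ht => by
    rw [heq t ht]
    exact mul_le_mul_of_nonneg_right (by linarith [ham.1 (mem_range_self t)]) (hφpos t).le
  have hlower : ∀ t, b ≤ t → φ t ≤ convol J φ t := fun t ht => by
    rw [heq t ht]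
    exact le_mul_of_one_le_left (hφpos t).le (by linarith [hap.1 (mem_range_self t)])
  have hderiv : ∀ t ∈ Ici (b + δ),
      |convol (deriv J) φ t| ≤ CJconst J δ * (1 + lam - am) * convol J φ t := fun t ht =>
    abs_convol_deriv_le_of_convol_le hJC1 hJnonneg hJsupp.le (abs_deriv_le_iSup hJC1 hJcs)
      (sInf_convol_self_pos hδ hJc hJcs hJnonneg hJpos) (fun _ => sInf_le_convol_self hJc hJcs)
      hφC (fun t => (hφpos t).le) hupper ht
  have hgrowth := le_exp_mul_of_abs_deriv_le (convex_Ici (b + δ))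
    (fun t _ => hasDerivAt_convol hJC1 hJcs hφC t)
    (fun t ht => (hφpos t).trans_le (hlower t (by linarith [mem_Ici.mp ht]))) hderiv hx hy
  calc φ y ≤ convol J φ y := hlower y (by linarith)
    _ ≤ exp (CJconst J δ * (1 + lam - am) * |x - y|) * convol J φ x := hgrowth
    _ ≤ exp (CJconst J δ * (1 + lam - am) * |x - y|) * ((1 + lam - am) * φ x) := by
      gcongr
      exact hupper x (by linarith)
    _ = (1 + lam - am) * exp (CJconst J δ * (1 + lam - am) * |x - y|) * φ x := by ring

/-- the Harnack-type inequality
`φ(y) ≤ (1 + λ − a_−) e^{C|x−y|} φ(x)` for all `x, y ∈ [b+δ, ∞)`,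
with `C = C_J (1 + λ − a_−)`. -/
theorem stmt6 (J a φ : ℝ → ℝ) (δ am ap lam b : ℝ) (hδ : 0 < δ)
    (hJC1 : ContDiff ℝ 1 J) (hJnonneg : ∀ x, 0 ≤ J x)
    (hJeven : ∀ x, J (-x) = J x) (hJanti : AntitoneOn J (Set.Ici 0))
    (hJsupp : tsupport J = Set.Icc (-δ) δ) (hJint : (∫ y, J y) = 1)
    (haC : Continuous a)
    (ham : IsGLB (Set.range a) am) (hap : IsLUB (Set.range a) ap)
    (hlam : ap < lam)
    (hφC : Continuous φ) (hφpos : ∀ x, 0 < φ x)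
    (heq : ∀ x, b ≤ x → convol J φ x = (1 + lam - a x) * φ x) :
    ∀ x y, b + δ ≤ x → b + δ ≤ y →
      φ y ≤ (1 + lam - am) *
        Real.exp (CJconst J δ * (1 + lam - am) * |x - y|) * φ x :=
  stmt6_general J a φ δ am ap lam b hδ hJC1 hJnonneg hJeven hJanti hJsupp ham hap hlam hφC hφpos heq
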